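/- Let g = g_{5,3,2(λ)}. For every F ∈ g*, the skew-symmetric bilinear form B_F has rank either 0 or 2; equivalently, the subspace {X ∈ g : F([X, Y]) = 0 for all Y ∈ g} has dimension 5 or 3. (This is the infinitesimal MD-condition: every coadjoint orbit of the corresponding connected simply connected Lie group G_{5,3,2(λ)} has dimension 0 or 2, so it is an MD5-group.) -/

import Mathlib

open scoped Matrix

/-- The Lie bracket of g_{5,3,2(λ)}: [X1,X2] = X3, [X2,X3] = X3, [X2,X4] = X4, [X2,X5] = λ·X5,
written in coordinates with respect to the basis (X₁, X₂, X₃, X₄, X₅) (all other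
brackets of basis vectors vanish); it is the bilinear extension of the structure
constants above. -/
def bracketg532 (l : ℝ) (U V : Fin 5 → ℝ) : Fin 5 → ℝ :=
  ![0, 0,
    (U 0 * V 1 - U 1 * V 0) + (U 1 * V 2 - U 2 * V 1),
    U 1 * V 3 - U 3 * V 1,
    l * (U 1 * V 4 - U 4 * V 1)]

/-- The matrix (in the basis (X₁, ..., X₅)) of the skew-symmetric bilinear form
B_F(X, Y) = F([X, Y]); the functional F is identified with its coordinate vector with
respect to the dual basis, acting by the dot product. -/
def BFg532 (l : ℝ) (F : Fin 5 → ℝ) : Matrix (Fin 5) (Fin 5) ℝ :=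
  Matrix.of fun i j => F ⬝ᵥ bracketg532 l (Pi.single i 1) (Pi.single j 1)

/-- The radical {X ∈ g | F([X, Y]) = 0 for all Y ∈ g} of the form B_F, as a subspace. -/
def radg532 (l : ℝ) (F : Fin 5 → ℝ) : Submodule ℝ (Fin 5 → ℝ) where
  carrier := {X | ∀ Y : Fin 5 → ℝ, F ⬝ᵥ bracketg532 l X Y = 0}
  zero_mem' := by
    intro Y
    simp [bracketg532, dotProduct, Fin.sum_univ_five]
  add_mem' := by
    intro a b ha hb Y
    have h1 := ha Y
    have h2 := hb Y
    simp only [bracketg532, dotProduct, Fin.sum_univ_five, Matrix.cons_val_zero,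
      Matrix.cons_val_one, Matrix.head_cons, Matrix.cons_val_two, Matrix.tail_cons,
      Matrix.cons_val_three, Matrix.cons_val_four, Pi.add_apply] at h1 h2 ⊢
    linear_combination h1 + h2
  smul_mem' := by
    intro c a ha Y
    have h1 := ha Y
    simp only [bracketg532, dotProduct, Fin.sum_univ_five, Matrix.cons_val_zero,
      Matrix.cons_val_one, Matrix.head_cons, Matrix.cons_val_two, Matrix.tail_cons,
      Matrix.cons_val_three, Matrix.cons_val_four, Pi.smul_apply, smul_eq_mul] at h1 ⊢
    linear_combination c * h1

/-! Every nonzero bracket of two basis vectors has `X₂` as an argument, hence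
`B_F(X, Y) = a(X) Y₂ - X₂ a(Y)` with `a = B_F(·, X₂)`, a vector whose `X₂`-coordinate vanishes.
Either `a = 0` and `B_F = 0`, or `a` and `e₂` are linearly independent and `B_F = a ∧ e₂` has
rank `2`. The radical of `B_F` is the kernel of its transpose, of dimension `5 - rank B_F`. -/

namespace Matrix

variable {K : Type*} [Field K]

theorem rank_mul_eq_left_of_rank_eq_card {l m n : Type*} [Fintype m] [Fintype n]
    {A : Matrix l m K} {B : Matrix m n K} (hB : B.rank = Fintype.card m) :
    (A * B).rank = A.rank := by
  have hsurj : LinearMap.range B.mulVecLin = ⊤ :=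
    Submodule.eq_top_of_finrank_eq (hB.trans (Module.finrank_fintype_fun_eq_card K).symm)
  rw [rank, rank, mulVecLin_mul, LinearMap.range_comp_of_range_eq_top _ hsurj]

theorem finrank_ker_mulVecLin_add_rank {m n : Type*} [Fintype n] (B : Matrix m n K) :
    Module.finrank K (LinearMap.ker B.mulVecLin) + B.rank = Fintype.card n := by
  rw [rank, add_comm, LinearMap.finrank_range_add_finrank_ker, Module.finrank_fintype_fun_eq_card]

theorem vecMulVec_sub_vecMulVec_eq_mul {n : Type*} (a b : n → K) :
    vecMulVec a b - vecMulVec b a =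
      (of ![a, b])ᵀ * ((!![0, 1; -1, 0] : Matrix (Fin 2) (Fin 2) K) * of ![a, b]) := by
  ext i j
  simp [vecMulVec, mul_apply, Fin.sum_univ_two, mul_comm, sub_eq_add_neg]

theorem rank_vecMulVec_sub_vecMulVec {n : Type*} [Fintype n] {a b : n → K}
    (h : LinearIndependent K ![a, b]) : (vecMulVec a b - vecMulVec b a).rank = 2 := by
  have hR : (of ![a, b]).rank = 2 := by simpa using h.rank_matrix (M := of ![a, b])
  have hJ : IsUnit (!![0, 1; -1, 0] : Matrix (Fin 2) (Fin 2) K).det := by simp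
  rw [vecMulVec_sub_vecMulVec_eq_mul, rank_mul_eq_left_of_rank_eq_card, rank_transpose, hR]
  rw [rank_mul_eq_right_of_isUnit_det _ _ hJ, hR, Fintype.card_fin]

end Matrix

theorem linearIndependent_pair_single {K n : Type*} [Field K] [DecidableEq n] {a : n → K}
    {i : n} (ha : a ≠ 0) (hai : a i = 0) : LinearIndependent K ![a, Pi.single i 1] := by
  refine LinearIndependent.pair_iff.mpr fun s t hst => ?_
  have ht : t = 0 := by simpa [hai] using congrFun hst i
  subst ht
  exact ⟨by simpa [ha] using hst, rfl⟩

open Matrix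

def BFg532ColX2 (l : ℝ) (F : Fin 5 → ℝ) : Fin 5 → ℝ := ![F 2, 0, -F 2, -F 3, -(l * F 4)]

theorem BFg532_eq_vecMulVec_sub_vecMulVec (l : ℝ) (F : Fin 5 → ℝ) :
    BFg532 l F = vecMulVec (BFg532ColX2 l F) (Pi.single 1 1) -
      vecMulVec (Pi.single 1 1) (BFg532ColX2 l F) := by
  ext i j
  fin_cases i <;> fin_cases j <;>
    simp [BFg532, bracketg532, BFg532ColX2, vecMulVec, dotProduct, Fin.sum_univ_five,
      Pi.single_apply, mul_comm]

theorem dotProduct_bracketg532 (l : ℝ) (F X Y : Fin 5 → ℝ) :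
    F ⬝ᵥ bracketg532 l X Y = X ⬝ᵥ (BFg532 l F *ᵥ Y) := by
  rw [BFg532_eq_vecMulVec_sub_vecMulVec]
  simp only [dotProduct, mulVec, vecMulVec, bracketg532, BFg532ColX2, Fin.sum_univ_five,
    Matrix.sub_apply, of_apply, Pi.single_apply, Fin.isValue, Fin.reduceEq, ↓reduceIte,
    cons_val_zero, cons_val_one, cons_val]
  ring

theorem radg532_eq_ker (l : ℝ) (F : Fin 5 → ℝ) :
    radg532 l F = LinearMap.ker (BFg532 l F)ᵀ.mulVecLin := by
  ext X
  change (∀ Y, _) ↔ _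
  simp only [dotProduct_bracketg532, dotProduct_mulVec, dotProduct_eq_zero_iff,
    LinearMap.mem_ker, mulVecLin_apply, mulVec_transpose]

theorem md_condition_g532_general (l : ℝ) (F : Fin 5 → ℝ) :
    ((BFg532 l F).rank = 0 ∨ (BFg532 l F).rank = 2) ∧
    (Module.finrank ℝ (radg532 l F) = 5 ∨ Module.finrank ℝ (radg532 l F) = 3) := by
  have hrank : (BFg532 l F).rank = 0 ∨ (BFg532 l F).rank = 2 := by
    rw [BFg532_eq_vecMulVec_sub_vecMulVec]
    by_cases ha : BFg532ColX2 l F = 0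
    · simp [ha]
    · exact Or.inr (rank_vecMulVec_sub_vecMulVec (linearIndependent_pair_single ha rfl))
  have hrad : Module.finrank ℝ (radg532 l F) + (BFg532 l F).rank = 5 := by
    rw [radg532_eq_ker, ← rank_transpose]
    exact finrank_ker_mulVecLin_add_rank _
  omega

/-- For every functional F, the skew-symmetric form B_F has rank 0 or 2; equivalently,
its radical {X | F([X, Y]) = 0 for all Y} has dimension 5 or 3 (the infinitesimal
MD-condition: every coadjoint orbit has dimension 0 or 2). -/
theorem md_condition_g532 (l : ℝ) (hl0 : l ≠ 0) (hl1 : l ≠ 1) (F : Fin 5 → ℝ) :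
    ((BFg532 l F).rank = 0 ∨ (BFg532 l F).rank = 2) ∧
    (Module.finrank ℝ (radg532 l F) = 5 ∨ Module.finrank ℝ (radg532 l F) = 3) :=
  md_condition_g532_general l F
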